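/- arXiv:1509.08411 — 5 statements merged into one kernel-verified Lean document; each statement's English description precedes it below -/
import Mathlib

section
/- There exist constants τ > 0 and c > 0 such that for every positive integer n and every set S = {a_1 < a_2 < ... < a_k} ⊆ {1, ..., n} with k > (1 - τ)·n, one has log M(a_1, ..., a_k) > c·n. -/
/-!
Take `ζ = exp (2πi / m)` with `m = n + J + 1` and `J ≈ n / 20`. The cyclotomic identity
`∏_{0 < a < m} (1 - ζ^a) = m` holds, and for the `J` indices `n < a < m` the point `ζ^a` is within
arc length `2πJ/m ≤ 1/2` of `1`, so the factors with `a ≤ n` have product at least `m · 2^J`.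
Every factor has modulus at most `2`, so removing the fewer than `τ n` indices of `{1, …, n}`
outside `S` costs at most a factor `2^{τ n}`, which leaves `M(S) ≥ 2^{J + 1 - τ n}`.
-/

open Finset

/-- `Mset S` is the maximum over `z` on the unit circle of `∏_{a ∈ S} |1 - z^a|`. -/
noncomputable def Mset (S : Finset ℕ) : ℝ :=
  ⨆ z : Metric.sphere (0 : ℂ) 1, ∏ a ∈ S, ‖1 - (z : ℂ) ^ a‖

open Real

lemma norm_one_sub_pow_le_two {z : ℂ} (hz : ‖z‖ ≤ 1) (a : ℕ) : ‖1 - z ^ a‖ ≤ 2 :=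
  calc ‖1 - z ^ a‖ ≤ ‖(1 : ℂ)‖ + ‖z‖ ^ a := (norm_sub_le _ _).trans_eq (by rw [norm_pow])
    _ ≤ 1 + 1 := by rw [norm_one]; gcongr; exact pow_le_one₀ (norm_nonneg _) hz
    _ = 2 := one_add_one_eq_two

lemma prod_norm_one_sub_pow_le_two_pow {z : ℂ} (hz : ‖z‖ ≤ 1) (S : Finset ℕ) :
    ∏ a ∈ S, ‖1 - z ^ a‖ ≤ 2 ^ #S :=
  (prod_le_prod (fun _ _ => norm_nonneg _) fun a _ => norm_one_sub_pow_le_two hz a).trans_eq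
    (prod_const 2)

lemma prod_norm_one_sub_pow_le_two_pow_mul {S T : Finset ℕ} (hST : S ⊆ T) {z : ℂ}
    (hz : ‖z‖ ≤ 1) :
    ∏ a ∈ T, ‖1 - z ^ a‖ ≤ 2 ^ #(T \ S) * ∏ a ∈ S, ‖1 - z ^ a‖ := by
  rw [← prod_sdiff hST]
  gcongr
  exact prod_norm_one_sub_pow_le_two_pow hz _

lemma prod_norm_one_sub_pow_le_Mset (S : Finset ℕ) (z : Metric.sphere (0 : ℂ) 1) :
    ∏ a ∈ S, ‖1 - (z : ℂ) ^ a‖ ≤ Mset S := by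
  refine le_ciSup (f := fun z : Metric.sphere (0 : ℂ) 1 => ∏ a ∈ S, ‖1 - (z : ℂ) ^ a‖)
    ⟨2 ^ #S, ?_⟩ z
  rintro _ ⟨w, rfl⟩
  exact prod_norm_one_sub_pow_le_two_pow (by simp) S

lemma IsPrimitiveRoot.prod_norm_one_sub_pow_Ioc {μ : ℂ} {m : ℕ}
    (hμ : IsPrimitiveRoot μ (m + 1)) :
    ∏ a ∈ Ioc 0 m, ‖1 - μ ^ a‖ = m + 1 := by
  rw [← norm_prod, ← Icc_add_one_left_eq_Ioc, ← Ico_add_one_right_eq_Icc, prod_Ico_eq_prod_range]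
  simp only [zero_add, Nat.add_sub_cancel, add_comm 1]
  rw [hμ.prod_one_sub_pow_eq_order]
  exact_mod_cast Complex.norm_natCast (m + 1)

lemma norm_one_sub_pow_eq_of_add_eq {μ : ℂ} {m a j : ℕ} (hμ : μ ^ m = 1) (h : a + j = m) :
    ‖1 - μ ^ a‖ = ‖1 - μ ^ j‖ := by
  rcases eq_or_ne m 0 with rfl | hm
  · obtain ⟨rfl, rfl⟩ : a = 0 ∧ j = 0 := by omega
    rfl
  have hμ_norm : ‖μ‖ = 1 := Complex.norm_eq_one_of_pow_eq_one hμ hm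
  have : 1 - μ ^ a = μ ^ a * (μ ^ j - 1) := by rw [mul_sub, ← pow_add, h, hμ, mul_one]
  rw [this, norm_mul, norm_pow, hμ_norm, one_pow, one_mul, norm_sub_rev]

lemma norm_one_sub_exp_pow_le (m j : ℕ) :
    ‖1 - Complex.exp (2 * π * Complex.I / m) ^ j‖ ≤ 2 * π * j / m := by
  have : Complex.exp (2 * π * Complex.I / m) ^ j =
      Complex.exp (Complex.I * ((2 * π * j / m : ℝ) : ℂ)) := by
    rw [← Complex.exp_nat_mul]; push_cast; ring_nf
  rw [this, norm_sub_rev]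
  exact norm_exp_I_mul_ofReal_sub_one_le.trans_eq (Real.norm_of_nonneg (by positivity))

lemma prod_norm_one_sub_exp_pow_Ioc_le {n J : ℕ} (hJ : 4 * π * J ≤ n + J + 1) :
    ∏ a ∈ Ioc n (n + J), ‖1 - Complex.exp (2 * π * Complex.I / (n + J + 1 : ℕ)) ^ a‖ ≤
      (1 / 2) ^ J := by
  set m := n + J + 1
  refine (prod_le_prod (fun _ _ => norm_nonneg _) fun a ha => ?_).trans_eq
    ((prod_const _).trans (by rw [Nat.card_Ioc, Nat.add_sub_cancel_left]))
  obtain ⟨hna, haJ⟩ := mem_Ioc.mp ha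
  have hζ : IsPrimitiveRoot (Complex.exp (2 * π * Complex.I / m)) m :=
    Complex.isPrimitiveRoot_exp m (by omega)
  rw [norm_one_sub_pow_eq_of_add_eq hζ.pow_eq_one (Nat.add_sub_of_le (by omega : a ≤ m))]
  refine (norm_one_sub_exp_pow_le m (m - a)).trans ?_
  have hm : (m : ℝ) = n + J + 1 := by push_cast [m]; rfl
  have hjJ : ((m - a : ℕ) : ℝ) ≤ J := by exact_mod_cast (by omega : m - a ≤ J)
  rw [div_le_iff₀ (by positivity)]
  nlinarith [mul_le_mul_of_nonneg_left hjJ Real.pi_pos.le]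

lemma natCast_mul_two_pow_le_two_pow_mul_Mset {n J : ℕ} {S : Finset ℕ} (hS : S ⊆ Ioc 0 n)
    (hJ : 4 * π * J ≤ n + J + 1) :
    ((n + J + 1 : ℕ) : ℝ) * 2 ^ J ≤ 2 ^ (n - #S) * Mset S := by
  set ζ := Complex.exp (2 * π * Complex.I / (n + J + 1 : ℕ))
  have hζ : IsPrimitiveRoot ζ (n + J + 1) := Complex.isPrimitiveRoot_exp _ (by omega)
  have hζ_norm : ‖ζ‖ = 1 := hζ.norm'_eq_one (by omega)
  have head : ∏ a ∈ Ioc 0 n, ‖1 - ζ ^ a‖ ≤ 2 ^ (n - #S) * Mset S := by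
    have := prod_norm_one_sub_pow_le_two_pow_mul hS hζ_norm.le
    rw [card_sdiff_of_subset hS, Nat.card_Ioc, Nat.sub_zero] at this
    exact this.trans (by gcongr; exact prod_norm_one_sub_pow_le_Mset S ⟨ζ, by simp [hζ_norm]⟩)
  calc ((n + J + 1 : ℕ) : ℝ) * 2 ^ J
      = (∏ a ∈ Ioc 0 n, ‖1 - ζ ^ a‖) * (∏ a ∈ Ioc n (n + J), ‖1 - ζ ^ a‖) * 2 ^ J := by
        rw [prod_Ioc_consecutive _ (Nat.zero_le n) (Nat.le_add_right n J),
          hζ.prod_norm_one_sub_pow_Ioc, Nat.cast_add_one]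
    _ ≤ (2 ^ (n - #S) * Mset S) * (1 / 2) ^ J * 2 ^ J := by
        gcongr
        · exact (prod_nonneg fun _ _ => norm_nonneg _).trans head
        · exact prod_norm_one_sub_exp_pow_Ioc_le hJ
    _ = 2 ^ (n - #S) * Mset S := by
        rw [mul_assoc, ← mul_pow]; norm_num

theorem stmt1 :
    ∃ τ : ℝ, 0 < τ ∧ ∃ c : ℝ, 0 < c ∧
      ∀ n : ℕ, 0 < n → ∀ S : Finset ℕ, S ⊆ Finset.Icc 1 n →
        (1 - τ) * n < S.card → c * n < Real.log (Mset S) := by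
  refine ⟨1 / 40, by norm_num, 1 / 80, by norm_num, fun n hn S hS hcard => ?_⟩
  set J := n / 20
  have hJ : 4 * π * J ≤ n + J + 1 := by
    have : (20 * J : ℝ) ≤ n := by exact_mod_cast Nat.mul_div_le n 20
    nlinarith [Real.pi_lt_d2]
  have hS' : S ⊆ Ioc 0 n := by rwa [← Icc_add_one_left_eq_Ioc]
  have hSn : #S ≤ n := by simpa using card_le_card hS'
  have key : (2 : ℝ) ^ (J + 1) ≤ 2 ^ (n - #S) * Mset S := by
    refine le_trans ?_ (natCast_mul_two_pow_le_two_pow_mul_Mset hS' hJ)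
    rw [pow_succ']
    gcongr
    exact_mod_cast (by omega : 2 ≤ n + J + 1)
  have hM : 0 < Mset S :=
    pos_of_mul_pos_right ((by positivity : (0 : ℝ) < _).trans_le key) (by positivity)
  have hlog : ((J : ℝ) + 1) * log 2 ≤ (n - #S : ℝ) * log 2 + log (Mset S) := by
    have := Real.log_le_log (by positivity) key
    rwa [Real.log_mul (by positivity) hM.ne', Real.log_pow, Real.log_pow, Nat.cast_sub hSn,
      Nat.cast_succ] at this
  have hJn : (n : ℝ) < 20 * (J + 1) := by exact_mod_cast (by omega : n < 20 * (J + 1))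
  have hgap : (n : ℝ) / 40 < J + 1 - (n - #S) := by linarith
  have hlog2 : 1 / 2 < log 2 := by linarith [Real.log_two_gt_d9]
  nlinarith [mul_lt_mul_of_pos_left hlog2 ((by positivity : (0 : ℝ) ≤ n / 40).trans_lt hgap)]
end

section
/- There is an absolute constant C > 0 with the following property: if c ≥ 1 and a_1 < ... < a_m are distinct positive integers with m ≥ 2 such that ∑_{k=1}^{m} cos(2π a_k θ) ≥ -c·√m for all real θ, then log M(a_1, ..., a_m) ≤ C · c · √m · log m. -/
open Finset Real

/-- `Mfun a` is the maximum over `z` on the unit circle of `∏_k |1 - z^{a k}|`. -/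
noncomputable def Mfun {m : ℕ} (a : Fin m → ℕ) : ℝ :=
  ⨆ z : Metric.sphere (0 : ℂ) 1, ∏ k, ‖(1 - (z : ℂ) ^ (a k))‖

/-!
For `0 ≤ r < 1` the expansion `log ‖1 - r w‖ = -∑ₙ rⁿ Re(wⁿ) / n` converges absolutely, so with
`w = z^{a_k}` and `∑ₖ Re(z^{n a_k}) ≥ -c√m` (the hypothesis at `θ = arg(zⁿ) / 2π`) one gets
`∑ₖ log ‖1 - r z^{a_k}‖ ≤ c√m · log (1 / (1 - r))`. Going back from `r z^{a_k}` to `z^{a_k}` costs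
a factor `r` per term, since `r ‖1 - w‖ ≤ ‖1 - r w‖` when `Re w ≤ 1`. The choice `r = 1 - 1/m`
turns the bound into `c√m log m`, at the price of `(1 - 1/m)⁻ᵐ ≤ e²`.
-/

namespace Complex

theorem hasSum_re_pow_div_neg_log_norm {u : ℂ} (hu : ‖u‖ < 1) :
    HasSum (fun n : ℕ ↦ (u ^ n).re / n) (-Real.log ‖1 - u‖) := by
  simpa [div_natCast_re, log_re] using hasSum_re (hasSum_taylorSeries_neg_log hu)

theorem mul_norm_one_sub_le_norm_one_sub_mul {r : ℝ} (hr0 : 0 ≤ r) (hr1 : r ≤ 1) {w : ℂ}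
    (hw : w.re ≤ 1) : r * ‖1 - w‖ ≤ ‖1 - r * w‖ := by
  rw [← sq_le_sq₀ (by positivity) (norm_nonneg _), mul_pow, ← normSq_eq_norm_sq,
    ← normSq_eq_norm_sq]
  simp only [normSq_apply, sub_re, sub_im, one_re, one_im, mul_re, mul_im, ofReal_re, ofReal_im]
  -- the difference of the two sides is `(1 - r) * (1 + r - 2 * r * w.re)`
  nlinarith [mul_nonneg (sub_nonneg.2 hr1) (mul_nonneg hr0 (sub_nonneg.2 hw))]

end Complex

open Complex in
theorem sum_log_norm_one_sub_mul_le {ι : Type*} [Fintype ι] {w : ι → ℂ} (hw : ∀ k, ‖w k‖ ≤ 1)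
    {B r : ℝ} (hr0 : 0 ≤ r) (hr1 : r < 1) (hB : ∀ n, 0 < n → -B ≤ ∑ k, (w k ^ n).re) :
    ∑ k, Real.log ‖1 - r * w k‖ ≤ -(B * Real.log (1 - r)) := by
  have hnorm : ∀ k, ‖(r : ℂ) * w k‖ < 1 := fun k ↦ by
    rw [norm_mul, norm_real, Real.norm_of_nonneg hr0]
    nlinarith [hw k, norm_nonneg (w k)]
  have hrw := hasSum_sum (s := univ) fun k _ ↦ hasSum_re_pow_div_neg_log_norm (hnorm k)
  have hr := hasSum_re_pow_div_neg_log_norm (u := r) (by rwa [norm_real, Real.norm_of_nonneg hr0])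
  rw [← ofReal_one, ← ofReal_sub, norm_real, Real.norm_of_nonneg (by linarith)] at hr
  have := hasSum_le (fun n ↦ ?_) (hr.mul_left (-B)) hrw
  · simp only [sum_neg_distrib, mul_neg, neg_mul, neg_neg] at this
    linarith
  rcases n.eq_zero_or_pos with rfl | hn
  · simp
  simp only [mul_pow, ← ofReal_pow, re_ofReal_mul, ofReal_re, mul_div_assoc', ← sum_div,
    ← mul_sum]
  rw [mul_comm]
  exact div_le_div_of_nonneg_right (mul_le_mul_of_nonneg_left (hB n hn) (by positivity))
    n.cast_nonneg

theorem pow_card_mul_prod_norm_one_sub_le {ι : Type*} [Fintype ι] {w : ι → ℂ}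
    (hw : ∀ k, ‖w k‖ ≤ 1) {B r : ℝ} (hr0 : 0 ≤ r) (hr1 : r < 1)
    (hB : ∀ n, 0 < n → -B ≤ ∑ k, (w k ^ n).re) :
    r ^ Fintype.card ι * ∏ k, ‖1 - w k‖ ≤ Real.exp (-(B * Real.log (1 - r))) := by
  have hpos : ∀ k, 0 < ‖1 - r * w k‖ := fun k ↦ by
    refine norm_pos_iff.2 (sub_ne_zero.2 fun h ↦ ?_)
    have := congrArg norm h
    rw [norm_one, norm_mul, Complex.norm_real, Real.norm_of_nonneg hr0] at this
    nlinarith [hw k, norm_nonneg (w k)]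
  calc r ^ Fintype.card ι * ∏ k, ‖1 - w k‖ = ∏ k, r * ‖1 - w k‖ := by
        rw [prod_mul_distrib, prod_const, card_univ]
    _ ≤ ∏ k, ‖1 - r * w k‖ := prod_le_prod (fun k _ ↦ by positivity) fun k _ ↦
        Complex.mul_norm_one_sub_le_norm_one_sub_mul hr0 hr1.le
          ((Complex.re_le_norm _).trans (hw k))
    _ = Real.exp (∑ k, Real.log ‖1 - r * w k‖) := by
        rw [Real.exp_sum]
        exact prod_congr rfl fun k _ ↦ (Real.exp_log (hpos k)).symm
    _ ≤ Real.exp (-(B * Real.log (1 - r))) :=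
        Real.exp_le_exp.2 (sum_log_norm_one_sub_mul_le hw hr0 hr1 hB)

theorem exp_neg_two_le_one_sub_inv_pow {m : ℕ} (hm : 2 ≤ m) :
    Real.exp (-2) ≤ (1 - (m : ℝ)⁻¹) ^ m := by
  have hm' : (2 : ℝ) ≤ m := by exact_mod_cast hm
  have hpos : 0 < 1 - (m : ℝ)⁻¹ := by
    have : (m : ℝ)⁻¹ ≤ 2⁻¹ := inv_anti₀ (by norm_num) hm'
    linarith
  rw [← Real.exp_log (pow_pos hpos m), Real.log_pow, Real.exp_le_exp]
  have hlog := Real.one_sub_inv_le_log_of_pos hpos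
  have hinv : (1 - (m : ℝ)⁻¹)⁻¹ = 1 + ((m : ℝ) - 1)⁻¹ := by
    have : (m : ℝ) - 1 ≠ 0 := by linarith
    field_simp
    ring
  rw [hinv] at hlog
  have : (m : ℝ) * ((m : ℝ) - 1)⁻¹ ≤ 2 := by
    rw [← div_eq_mul_inv, div_le_iff₀ (by linarith)]
    linarith
  nlinarith

theorem re_pow_eq_cos {w : ℂ} (hw : ‖w‖ = 1) (j : ℕ) :
    (w ^ j).re = Real.cos (2 * π * j * (Complex.arg w / (2 * π))) := by
  have hexp := Complex.norm_mul_exp_arg_mul_I w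
  rw [hw, Complex.ofReal_one, one_mul] at hexp
  conv_lhs => rw [← hexp, ← Complex.exp_nat_mul]
  rw [show 2 * π * j * (w.arg / (2 * π)) = j * w.arg by field_simp, ← Complex.exp_ofReal_mul_I_re]
  push_cast
  ring_nf

theorem neg_le_sum_re_pow_of_neg_le_sum_cos {ι : Type*} [Fintype ι] (a : ι → ℕ) {B : ℝ}
    (hB : ∀ θ : ℝ, -B ≤ ∑ k, Real.cos (2 * π * (a k) * θ)) {w : ℂ} (hw : ‖w‖ = 1) :
    -B ≤ ∑ k, (w ^ a k).re := by
  simpa only [re_pow_eq_cos hw] using hB (w.arg / (2 * π))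

theorem Mfun_le_exp {m : ℕ} (hm : 2 ≤ m) (a : Fin m → ℕ) {B : ℝ}
    (hB : ∀ θ : ℝ, -B ≤ ∑ k, Real.cos (2 * π * (a k) * θ)) :
    Mfun a ≤ Real.exp (B * Real.log m + 2) := by
  refine Real.iSup_le (fun z ↦ ?_) (Real.exp_pos _).le
  have hz : ‖(z : ℂ)‖ = 1 := mem_sphere_zero_iff_norm.1 z.2
  have hm' : (2 : ℝ) ≤ m := by exact_mod_cast hm
  have hinv : (m : ℝ)⁻¹ ≤ 1 := inv_le_one_of_one_le₀ (by linarith)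
  have hprod := pow_card_mul_prod_norm_one_sub_le (w := fun k ↦ (z : ℂ) ^ a k)
    (fun k ↦ by rw [norm_pow, hz, one_pow]) (sub_nonneg.2 hinv)
    (sub_lt_self 1 (by positivity)) (B := B) fun n _ ↦ by
      simpa only [pow_right_comm _ n] using
        neg_le_sum_re_pow_of_neg_le_sum_cos a hB (w := (z : ℂ) ^ n) (by rw [norm_pow, hz, one_pow])
  rw [sub_sub_cancel, Real.log_inv, Fintype.card_fin, mul_neg, neg_neg] at hprod
  have hr := exp_neg_two_le_one_sub_inv_pow hm
  calc ∏ k, ‖1 - (z : ℂ) ^ a k‖ ≤ Real.exp (B * Real.log m) / (1 - (m : ℝ)⁻¹) ^ m :=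
        (le_div_iff₀' ((Real.exp_pos _).trans_le hr)).2 hprod
    _ ≤ Real.exp (B * Real.log m) / Real.exp (-2) :=
        div_le_div_of_nonneg_left (Real.exp_pos _).le (Real.exp_pos _) hr
    _ = Real.exp (B * Real.log m + 2) := by rw [← Real.exp_sub, sub_neg_eq_add]

theorem Mfun_nonneg {m : ℕ} (a : Fin m → ℕ) : 0 ≤ Mfun a :=
  Real.iSup_nonneg fun _ ↦ by positivity

theorem stmt7 :
    ∃ C : ℝ, 0 < C ∧ ∀ c : ℝ, 1 ≤ c → ∀ m : ℕ, 2 ≤ m → ∀ a : Fin m → ℕ,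
      (∀ k, 0 < a k) → StrictMono a →
      (∀ θ : ℝ, -(c * Real.sqrt m) ≤ ∑ k, Real.cos (2 * π * (a k) * θ)) →
      Real.log (Mfun a) ≤ C * c * Real.sqrt m * Real.log m := by
  refine ⟨4, by norm_num, fun c hc m hm a _ _ hcos ↦ ?_⟩
  have hsqrt : 1 ≤ √(m : ℝ) := Real.one_le_sqrt.2 (by exact_mod_cast (by omega : 1 ≤ m))
  have hlog : Real.log 2 ≤ Real.log m := Real.log_le_log two_pos (by exact_mod_cast hm)
  have hlower : 2 / 3 ≤ c * √(m : ℝ) * Real.log m := by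
    nlinarith [Real.log_two_gt_d9, mul_le_mul hc hsqrt zero_le_one (by linarith)]
  have hM := Mfun_le_exp hm a hcos
  rcases (Mfun_nonneg a).eq_or_lt with h0 | hpos
  · rw [← h0, Real.log_zero]
    linarith
  · linarith [(Real.log_le_iff_le_exp hpos).2 hM]
end

section
/- Let t be a positive integer and let a_1, ..., a_s be positive integers, each dividing t. Suppose that for each i ∈ {1, ..., s} there is a prime p_i and a positive integer b_i with t/a_i = p_i · b_i, and suppose that p_i does not divide t/a_j whenever i < j. Then the integers a_1, ..., a_s are pairwise distinct and the set {a_1, ..., a_s} is dissociated. -/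
open Finset

/-- A finite set of naturals is dissociated if the only `{-1,0,1}`-relation among its
elements is the trivial one. -/
def Dissociated (D : Finset ℕ) : Prop :=
  ∀ ε : ℕ → ℤ, (∀ d ∈ D, ε d = -1 ∨ ε d = 0 ∨ ε d = 1) →
    (∑ d ∈ D, ε d * (d : ℤ)) = 0 → ∀ d ∈ D, ε d = 0

theorem stmt10 (t : ℕ) (ht : 0 < t) (s : ℕ) (a p b : Fin s → ℕ)
    (ha : ∀ i, 0 < a i ∧ a i ∣ t)
    (hpb : ∀ i, (p i).Prime ∧ 0 < b i ∧ t / a i = p i * b i)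
    (hnd : ∀ i j : Fin s, i < j → ¬ (p i ∣ t / a j)) :
    Function.Injective a ∧ Dissociated (Finset.image a Finset.univ) := by
  classical
  have hinj : Function.Injective a := by
    intro i j hij
    by_contra hne
    rcases lt_or_gt_of_ne hne with h | h
    · exact hnd i j h (by rw [← hij, (hpb i).2.2]; exact dvd_mul_right _ _)
    · exact hnd j i h (by rw [hij, (hpb j).2.2]; exact dvd_mul_right _ _)
  refine ⟨hinj, ?_⟩
  intro ε hε hsum
  rw [Finset.sum_image (fun x _ y _ h => hinj h)] at hsum
  suffices hz : ∀ i : Fin s, ε (a i) = 0 by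
    intro d hd
    obtain ⟨i, _, rfl⟩ := Finset.mem_image.mp hd
    exact hz i
  by_contra hc
  push_neg at hc
  set S : Finset (Fin s) := univ.filter fun i => ε (a i) ≠ 0 with hSdef
  have hS : S.Nonempty := by
    obtain ⟨i, hi⟩ := hc; exact ⟨i, by simp [hSdef, hi]⟩
  set i := S.min' hS with hidef
  have hεi : ε (a i) ≠ 0 := by
    have := S.min'_mem hS
    simpa [hSdef] using this
  have hmin : ∀ j, j < i → ε (a j) = 0 := by
    intro j hj
    by_contra hj0
    exact absurd (S.min'_le j (by simp [hSdef, hj0])) (not_le.mpr hj)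
  set e := t.factorization (p i) with hedef
  have ht0 : t ≠ 0 := ht.ne'
  have hdvdj : ∀ j, i < j → (p i) ^ e ∣ a j := by
    intro j hj
    have haj : a j ∣ t := (ha j).2
    have h1 : a j * (t / a j) = t := Nat.mul_div_cancel' haj
    have h2 : t / a j ≠ 0 := by
      intro h0; rw [h0, mul_zero] at h1; exact ht0 h1.symm
    have hfac : (a j).factorization (p i) = e := by
      have := congrArg (fun f => f (p i))
        (congrArg Nat.factorization h1.symm)
      rw [Nat.factorization_mul (ha j).1.ne' h2] at this
      simp only [Finsupp.add_apply] at this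
      rw [Nat.factorization_eq_zero_of_not_dvd (hnd i j hj)] at this
      omega
    calc (p i) ^ e = (p i) ^ ((a j).factorization (p i)) := by rw [hfac]
      _ ∣ a j := Nat.ordProj_dvd _ _
  have hndvd : ¬ (p i) ^ e ∣ a i := by
    intro hdvd
    have hle : e ≤ (a i).factorization (p i) :=
      (Nat.Prime.pow_dvd_iff_le_factorization (hpb i).1 (ha i).1.ne').mp hdvd
    have h1 : a i * (t / a i) = t := Nat.mul_div_cancel' (ha i).2
    have h2 : t / a i ≠ 0 := by
      intro h0; rw [h0, mul_zero] at h1; exact ht0 h1.symm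
    have hpos : 0 < (t / a i).factorization (p i) :=
      (hpb i).1.factorization_pos_of_dvd h2
        (by rw [(hpb i).2.2]; exact dvd_mul_right _ _)
    have := congrArg (fun f => f (p i)) (congrArg Nat.factorization h1.symm)
    rw [Nat.factorization_mul (ha i).1.ne' h2] at this
    simp only [Finsupp.add_apply] at this
    omega
  -- split the sum
  have hsplit : ε (a i) * (a i : ℤ) + ∑ j ∈ univ.erase i, ε (a j) * (a j : ℤ) = 0 := by
    rw [Finset.add_sum_erase univ (fun j => ε (a j) * (a j : ℤ)) (mem_univ i)]
    exact hsum
  have hdvdsum : ((p i : ℤ)) ^ e ∣ ∑ j ∈ univ.erase i, ε (a j) * (a j : ℤ) := by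
    apply Finset.dvd_sum
    intro j hj
    have hji : j ≠ i := (Finset.mem_erase.mp hj).1
    rcases lt_or_gt_of_ne hji with h | h
    · rw [hmin j h, zero_mul]; exact dvd_zero _
    · have := hdvdj j h
      have : ((p i : ℤ)) ^ e ∣ (a j : ℤ) := by
        have := Int.natCast_dvd_natCast.mpr this
        push_cast at this ⊢
        exact this
      exact this.mul_left _
  have hdvdai : ((p i : ℤ)) ^ e ∣ (a i : ℤ) := by
    have h1 : ((p i : ℤ)) ^ e ∣ ε (a i) * (a i : ℤ) := by
      have : ε (a i) * (a i : ℤ) = -∑ j ∈ univ.erase i, ε (a j) * (a j : ℤ) := by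
        linarith [hsplit]
      rw [this]
      exact hdvdsum.neg_right
    rcases hε (a i) (Finset.mem_image_of_mem a (mem_univ i)) with h | h | h
    · rw [h] at h1; simpa using h1.neg_right
    · exact absurd h hεi
    · rw [h, one_mul] at h1; exact h1
  have : (p i) ^ e ∣ a i := by
    rw [← Int.natCast_dvd_natCast]
    push_cast
    exact hdvdai
  exact hndvd this
end

section
/- There is an absolute constant C > 0 with the following property: let t be a positive integer, K ≥ 2, and let J be a set of divisors a of t such that K ≤ t/a < 2K for every a ∈ J. Then ∑_{a ∈ J} (a/t) · 2^{ω(t/a)} ≤ C · (|J|/K)^{1/2} · (log K)^2. -/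
/-!
Put `m = t / a`, so that `a / t = 1 / m` and the sum runs over a set `S` of `|J|` integers in
`[K, 2K)`. Bounding `2 ^ ω(m) ≤ d(m)` and `1 / m ≤ 1 / K`, Cauchy–Schwarz reduces the claim to
the second moment `∑_{m ≤ N} d(m)² ≤ N (1 + log N)³`. That moment bound comes from
`d(m)² = #{(d₁, d₂) | lcm d₁ d₂ ∣ m}` and `∑_{d₁, d₂ ≤ N} 1 / lcm d₁ d₂ ≤ (∑_{n ≤ N} 1 / n)³`,
where the latter follows from `1 / lcm d₁ d₂ = gcd d₁ d₂ / (d₁ d₂)` by summing over the common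
divisors instead of the gcd.
-/

open Finset ArithmeticFunction

lemma sum_Ioc_inv_le_one_add_log (N : ℕ) : ∑ n ∈ Ioc 0 N, (n : ℝ)⁻¹ ≤ 1 + Real.log N := by
  have h := harmonic_le_one_add_log N
  rw [harmonic_eq_sum_Icc] at h
  push_cast at h
  rwa [← Icc_add_one_left_eq_Ioc]

lemma sum_inv_multiples_le (N g : ℕ) :
    ∑ d ∈ Ioc 0 N with g ∣ d, (d : ℝ)⁻¹ ≤ (∑ n ∈ Ioc 0 N, (n : ℝ)⁻¹) / g := by
  have hsub : {d ∈ Ioc 0 N | g ∣ d} ⊆ (Ioc 0 N).image (g * ·) := by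
    rintro d hd
    obtain ⟨⟨hd0, hdN⟩, e, rfl⟩ := by simpa only [mem_filter, mem_Ioc] using hd
    exact mem_image.2 ⟨e, mem_Ioc.2 ⟨Nat.pos_of_mul_pos_left hd0,
      (Nat.le_of_dvd hd0 (dvd_mul_left e g)).trans hdN⟩, rfl⟩
  calc ∑ d ∈ Ioc 0 N with g ∣ d, (d : ℝ)⁻¹
      ≤ ∑ d ∈ (Ioc 0 N).image (g * ·), (d : ℝ)⁻¹ :=
        sum_le_sum_of_subset_of_nonneg hsub fun _ _ _ => by positivity
    _ ≤ ∑ e ∈ Ioc 0 N, ((g * e : ℕ) : ℝ)⁻¹ := sum_image_le_of_nonneg fun _ _ => by positivity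
    _ = (∑ n ∈ Ioc 0 N, (n : ℝ)⁻¹) / g := by
        simp only [Nat.cast_mul, mul_inv, ← mul_sum, div_eq_mul_inv, mul_comm]

lemma inv_lcm_le_sum_common_divisors {N d₁ : ℕ} (h₁ : d₁ ∈ Ioc 0 N) (d₂ : ℕ) :
    ((d₁.lcm d₂ : ℕ) : ℝ)⁻¹ ≤ ∑ g ∈ Ioc 0 N,
      g * ((if g ∣ d₁ then (d₁ : ℝ)⁻¹ else 0) * (if g ∣ d₂ then (d₂ : ℝ)⁻¹ else 0)) := by
  rw [mem_Ioc] at h₁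
  have hgcd : d₁.gcd d₂ ∈ Ioc 0 N :=
    mem_Ioc.2 ⟨Nat.gcd_pos_of_pos_left _ h₁.1, (Nat.gcd_le_left _ h₁.1).trans h₁.2⟩
  have hlcm : ((d₁.lcm d₂ : ℕ) : ℝ)⁻¹ = d₁.gcd d₂ * ((d₁ : ℝ)⁻¹ * (d₂ : ℝ)⁻¹) := by
    have h : ((d₁.gcd d₂ : ℕ) : ℝ) * (d₁.lcm d₂ : ℕ) = d₁ * d₂ := by
      exact_mod_cast Nat.gcd_mul_lcm d₁ d₂
    have : ((d₁.gcd d₂ : ℕ) : ℝ) ≠ 0 := by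
      exact_mod_cast (Nat.gcd_pos_of_pos_left _ h₁.1).ne'
    rw [← mul_inv, ← h, mul_inv, ← mul_assoc, mul_inv_cancel₀ this, one_mul]
  refine hlcm.trans_le (le_of_eq_of_le ?_ (single_le_sum (fun g _ => ?_) hgcd))
  · simp [Nat.gcd_dvd_left, Nat.gcd_dvd_right]
  · positivity

lemma sum_inv_lcm_le (N : ℕ) :
    ∑ d₁ ∈ Ioc 0 N, ∑ d₂ ∈ Ioc 0 N, ((d₁.lcm d₂ : ℕ) : ℝ)⁻¹ ≤ (1 + Real.log N) ^ 3 := by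
  set H := ∑ n ∈ Ioc 0 N, (n : ℝ)⁻¹
  set S : ℕ → ℝ := fun g => ∑ d ∈ Ioc 0 N, if g ∣ d then (d : ℝ)⁻¹ else 0
  have hS : ∀ g, S g ≤ H / g := fun g => by
    simp only [S]
    rw [← sum_filter]
    exact sum_inv_multiples_le N g
  have hH : 0 ≤ H := sum_nonneg fun _ _ => by positivity
  calc ∑ d₁ ∈ Ioc 0 N, ∑ d₂ ∈ Ioc 0 N, ((d₁.lcm d₂ : ℕ) : ℝ)⁻¹
      ≤ ∑ d₁ ∈ Ioc 0 N, ∑ d₂ ∈ Ioc 0 N, ∑ g ∈ Ioc 0 N,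
          g * ((if g ∣ d₁ then (d₁ : ℝ)⁻¹ else 0) * (if g ∣ d₂ then (d₂ : ℝ)⁻¹ else 0)) :=
        sum_le_sum fun _ h₁ => sum_le_sum fun d₂ _ => inv_lcm_le_sum_common_divisors h₁ d₂
    _ = ∑ g ∈ Ioc 0 N, g * (S g * S g) := by
        rw [sum_congr rfl fun _ _ => sum_comm, sum_comm]
        simp only [S, sum_mul_sum]
        simp only [mul_sum]
    _ ≤ ∑ g ∈ Ioc 0 N, g * (H / g * (H / g)) := by gcongr <;> apply hS
    _ = ∑ g ∈ Ioc 0 N, H ^ 2 * (g : ℝ)⁻¹ := by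
        refine sum_congr rfl fun g hg => ?_
        have : (g : ℝ) ≠ 0 := by exact_mod_cast (mem_Ioc.1 hg).1.ne'
        field_simp
    _ = H ^ 3 := by
        rw [← mul_sum]
        exact (pow_succ H 2).symm
    _ ≤ (1 + Real.log N) ^ 3 := pow_le_pow_left₀ hH (sum_Ioc_inv_le_one_add_log N) 3

lemma divisors_eq_filter_Ioc {m N : ℕ} (hm : m ∈ Ioc 0 N) :
    m.divisors = {d ∈ Ioc 0 N | d ∣ m} := by
  rw [mem_Ioc] at hm
  ext d
  simp only [Nat.mem_divisors, mem_filter, mem_Ioc]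
  constructor
  · rintro ⟨hd, -⟩
    exact ⟨⟨Nat.pos_of_dvd_of_pos hd hm.1, (Nat.le_of_dvd hm.1 hd).trans hm.2⟩, hd⟩
  · rintro ⟨-, hd⟩
    exact ⟨hd, hm.1.ne'⟩

lemma sum_card_divisors_sq_le (N : ℕ) :
    ∑ m ∈ Ioc 0 N, (#m.divisors : ℝ) ^ 2 ≤ N * (1 + Real.log N) ^ 3 := by
  calc ∑ m ∈ Ioc 0 N, (#m.divisors : ℝ) ^ 2
      = ∑ m ∈ Ioc 0 N, ∑ d₁ ∈ Ioc 0 N, ∑ d₂ ∈ Ioc 0 N,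
          if d₁.lcm d₂ ∣ m then (1 : ℝ) else 0 := by
        refine sum_congr rfl fun m hm => ?_
        rw [divisors_eq_filter_Ioc hm, card_filter, Nat.cast_sum, sq, sum_mul_sum]
        refine sum_congr rfl fun d₁ _ => sum_congr rfl fun d₂ _ => ?_
        by_cases h₁ : d₁ ∣ m <;> by_cases h₂ : d₂ ∣ m <;> simp [h₁, h₂, Nat.lcm_dvd_iff]
    _ = ∑ d₁ ∈ Ioc 0 N, ∑ d₂ ∈ Ioc 0 N, (#{m ∈ Ioc 0 N | d₁.lcm d₂ ∣ m} : ℝ) := by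
        rw [sum_comm, sum_congr rfl fun _ _ => sum_comm]
        simp only [card_filter, Nat.cast_sum, Nat.cast_ite, Nat.cast_one, Nat.cast_zero]
    _ ≤ ∑ d₁ ∈ Ioc 0 N, ∑ d₂ ∈ Ioc 0 N, (N : ℝ) * ((d₁.lcm d₂ : ℕ) : ℝ)⁻¹ := by
        gcongr with d₁ _ d₂ _
        rw [Nat.Ioc_filter_dvd_card_eq_div, ← div_eq_mul_inv]
        exact Nat.cast_div_le
    _ ≤ N * (1 + Real.log N) ^ 3 := by
        simp only [← mul_sum]
        gcongr
        exact sum_inv_lcm_le N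

lemma two_pow_cardDistinctFactors_le_card_divisors {n : ℕ} (hn : n ≠ 0) :
    2 ^ cardDistinctFactors n ≤ #n.divisors := by
  rw [cardDistinctFactors_apply, ← List.card_toFinset, ← Nat.primeFactors, Nat.card_divisors hn,
    ← prod_const]
  refine prod_le_prod' fun p hp => ?_
  have : n.factorization p ≠ 0 := Finsupp.mem_support_iff.1 (Nat.support_factorization n ▸ hp)
  omega

lemma natCast_mul_one_add_log_pow_le {N : ℕ} {K : ℝ} (hK : 2 ≤ K) (hN : (N : ℝ) ≤ 2 * K) :
    N * (1 + Real.log N) ^ 3 ≤ (16 * Real.log K ^ 2) ^ 2 * K := by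
  have hlog2 : 1 / 2 ≤ Real.log 2 := by linarith [Real.log_two_gt_d9]
  have hlogK : Real.log 2 ≤ Real.log K := Real.log_le_log (by norm_num) hK
  have hlogN : 1 + Real.log N ≤ 4 * Real.log K := by
    rcases N.eq_zero_or_pos with rfl | hN0
    · simp only [CharP.cast_eq_zero, Real.log_zero]
      linarith
    calc 1 + Real.log N ≤ 1 + Real.log (2 * K) := by gcongr
      _ = 1 + Real.log 2 + Real.log K := by rw [Real.log_mul two_ne_zero (by linarith)]; ring
      _ ≤ 4 * Real.log K := by linarith
  have h0 : 0 ≤ 1 + Real.log N := by linarith [Real.log_natCast_nonneg N]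
  calc (N : ℝ) * (1 + Real.log N) ^ 3 ≤ (2 * K) * (4 * Real.log K) ^ 3 := by gcongr
    _ ≤ (16 * Real.log K ^ 2) ^ 2 * K := by
        have : 0 ≤ K * Real.log K ^ 3 := mul_nonneg (by linarith) (pow_nonneg (by linarith) 3)
        nlinarith [mul_nonneg this (by linarith : (0 : ℝ) ≤ 2 * Real.log K - 1)]

lemma div_le_mul_sqrt_div_of_sq_le {A n c K : ℝ} (hK : 0 < K) (hc : 0 ≤ c)
    (h : A ^ 2 ≤ n * (c ^ 2 * K)) : A / K ≤ c * Real.sqrt (n / K) := by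
  have hsq : n * (c ^ 2 * K) = n / K * (c * K) ^ 2 := by field_simp
  rw [div_le_iff₀ hK]
  calc A ≤ Real.sqrt (n * (c ^ 2 * K)) := Real.le_sqrt_of_sq_le h
    _ = c * Real.sqrt (n / K) * K := by
        rw [hsq, Real.sqrt_mul' _ (sq_nonneg _), Real.sqrt_sq (by positivity)]
        ring

lemma sum_two_pow_cardDistinctFactors_div_le {K : ℝ} (hK : 2 ≤ K) {S : Finset ℕ}
    (hS : ∀ m ∈ S, K ≤ m ∧ (m : ℝ) < 2 * K) :
    ∑ m ∈ S, (2 : ℝ) ^ cardDistinctFactors m / m ≤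
      16 * Real.sqrt (#S / K) * Real.log K ^ 2 := by
  have hK0 : 0 < K := by linarith
  set N := ⌊2 * K⌋₊
  have hSN : S ⊆ Ioc 0 N := fun m hm => by
    obtain ⟨h₁, h₂⟩ := hS m hm
    exact mem_Ioc.2 ⟨by exact_mod_cast hK0.trans_le h₁, Nat.le_floor h₂.le⟩
  set A := ∑ m ∈ S, (#m.divisors : ℝ)
  have hterm : ∑ m ∈ S, (2 : ℝ) ^ cardDistinctFactors m / m ≤ A / K := by
    rw [sum_div]
    refine sum_le_sum fun m hm => ?_
    have hm0 : m ≠ 0 := (mem_Ioc.1 (hSN hm)).1.ne'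
    gcongr
    · exact_mod_cast two_pow_cardDistinctFactors_le_card_divisors hm0
    · exact (hS m hm).1
  have hA : A ^ 2 ≤ #S * ((16 * Real.log K ^ 2) ^ 2 * K) :=
    calc A ^ 2 ≤ #S * ∑ m ∈ S, (#m.divisors : ℝ) ^ 2 := sq_sum_le_card_mul_sum_sq
      _ ≤ #S * ∑ m ∈ Ioc 0 N, (#m.divisors : ℝ) ^ 2 := by gcongr
      _ ≤ #S * ((16 * Real.log K ^ 2) ^ 2 * K) := by
          gcongr
          exact (sum_card_divisors_sq_le N).trans
            (natCast_mul_one_add_log_pow_le hK (Nat.floor_le (by positivity)))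
  calc ∑ m ∈ S, (2 : ℝ) ^ cardDistinctFactors m / m ≤ A / K := hterm
    _ ≤ 16 * Real.log K ^ 2 * Real.sqrt (#S / K) :=
        div_le_mul_sqrt_div_of_sq_le hK0 (by positivity) hA
    _ = 16 * Real.sqrt (#S / K) * Real.log K ^ 2 := by ring

lemma div_injOn_dvd {t : ℕ} (ht : t ≠ 0) : Set.InjOn (t / ·) {a | a ∣ t} := fun a ha b hb h => by
  rw [← Nat.div_div_self ha ht, ← Nat.div_div_self hb ht]
  exact congrArg (t / ·) h

lemma sum_div_mul_eq_sum_image {t : ℕ} (ht : t ≠ 0) {J : Finset ℕ} (hJ : ∀ a ∈ J, a ∣ t)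
    (f : ℕ → ℝ) : ∑ a ∈ J, (a / t : ℝ) * f (t / a) = ∑ m ∈ J.image (t / ·), f m / m := by
  rw [sum_image ((div_injOn_dvd ht).mono hJ)]
  refine sum_congr rfl fun a ha => ?_
  have ha0 : (a : ℝ) ≠ 0 := by exact_mod_cast ne_zero_of_dvd_ne_zero ht (hJ a ha)
  have ht0 : (t : ℝ) ≠ 0 := by exact_mod_cast ht
  rw [Nat.cast_div (hJ a ha) ha0]
  field_simp

theorem stmt12 :
    ∃ C : ℝ, 0 < C ∧ ∀ t : ℕ, 0 < t → ∀ K : ℝ, 2 ≤ K → ∀ J : Finset ℕ,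
      (∀ a ∈ J, a ∣ t ∧ K ≤ ((t / a : ℕ) : ℝ) ∧ ((t / a : ℕ) : ℝ) < 2 * K) →
      ∑ a ∈ J, ((a : ℝ) / t) * 2 ^ (cardDistinctFactors (t / a)) ≤
        C * Real.sqrt ((J.card : ℝ) / K) * (Real.log K) ^ 2 := by
  refine ⟨16, by norm_num, fun t ht K hK J hJ => ?_⟩
  have hdvd : ∀ a ∈ J, a ∣ t := fun a ha => (hJ a ha).1
  have hcard : #(J.image (t / ·)) = #J := card_image_of_injOn ((div_injOn_dvd ht.ne').mono hdvd)
  rw [sum_div_mul_eq_sum_image ht.ne' hdvd (fun m => 2 ^ cardDistinctFactors m), ← hcard]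
  refine sum_two_pow_cardDistinctFactors_div_le hK fun m hm => ?_
  obtain ⟨a, ha, rfl⟩ := mem_image.1 hm
  exact (hJ a ha).2
end

section
/- Let θ be a real number, ε > 0, n a positive integer, and let q be a positive integer such that ‖kθ‖ ≥ 2ε for all positive integers k < q. Then the number of integers ℓ with 1 ≤ ℓ ≤ n and ‖ℓθ‖ < ε is at most 2·(n/q + 1). -/
open Finset
open scoped Classical

/-- `distNearestInt x` is the distance from `x` to the nearest integer. -/
noncomputable def distNearestInt (x : ℝ) : ℝ := |x - round x|

lemma round_nearest (x : ℝ) (m : ℤ) : |x - round x| ≤ |x - m| := by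
  rcases eq_or_ne (round x) m with h | h
  · rw [h]
  · have h1 : (1 : ℝ) ≤ |(round x : ℝ) - m| := by
      have : round x - m ≠ 0 := sub_ne_zero.mpr h
      exact_mod_cast Int.one_le_abs this
    have h2 : |x - round x| ≤ 1/2 := abs_sub_round x
    have : |(round x : ℝ) - m| ≤ |round x - x| + |x - m| := abs_sub_le _ _ _
    rw [abs_sub_comm (round x : ℝ) x] at this
    linarith

lemma dni_sub (x y : ℝ) : distNearestInt (x - y) ≤ distNearestInt x + distNearestInt y := by
  unfold distNearestInt
  calc |x - y - round (x - y)| ≤ |x - y - ((round x : ℤ) - round y : ℤ)| :=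
        round_nearest _ _
    _ ≤ |x - round x| + |y - round y| := by
        push_cast
        rw [show x - y - ((round x : ℝ) - round y) = (x - round x) - (y - round y) by ring]
        exact abs_sub _ _

theorem stmt15 (θ : ℝ) (ε : ℝ) (hε : 0 < ε) (n q : ℕ) (hn : 0 < n) (hq : 0 < q)
    (hsep : ∀ k : ℕ, 0 < k → k < q → 2 * ε ≤ distNearestInt ((k : ℝ) * θ)) :
    (((Finset.Icc 1 n).filter (fun ℓ : ℕ => distNearestInt ((ℓ : ℝ) * θ) < ε)).card : ℝ) ≤
      2 * ((n : ℝ) / q + 1) := by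
  set S := (Finset.Icc 1 n).filter (fun ℓ : ℕ => distNearestInt ((ℓ : ℝ) * θ) < ε) with hS
  -- elements of S are ≥ q apart
  have gap : ∀ a ∈ S, ∀ b ∈ S, a < b → q ≤ b - a := by
    intro a ha b hb hab
    by_contra h
    push_neg at h
    have hpos : 0 < b - a := Nat.sub_pos_of_lt hab
    have hs := hsep (b - a) hpos h
    have ha' := (mem_filter.mp ha).2
    have hb' := (mem_filter.mp hb).2
    have hcast : ((b - a : ℕ) : ℝ) * θ = (b : ℝ) * θ - (a : ℝ) * θ := by
      rw [Nat.cast_sub hab.le]; ring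
    rw [hcast] at hs
    have := dni_sub ((b : ℝ) * θ) ((a : ℝ) * θ)
    linarith
  -- the map ℓ ↦ ℓ / q is injective on S
  have hinj : Set.InjOn (fun ℓ => ℓ / q) (S : Set ℕ) := by
    intro a ha b hb hab
    simp only at hab
    by_contra hne
    rcases Nat.lt_or_ge a b with h | h
    · have hq' := gap a ha b hb h
      have : a / q + 1 ≤ b / q := by
        have : a + q ≤ b := by omega
        calc a / q + 1 = (a + q) / q := by rw [Nat.add_div_right _ hq]
          _ ≤ b / q := Nat.div_le_div_right this
      omega
    · have h' : b < a := by omega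
      have hq' := gap b hb a ha h'
      have : b / q + 1 ≤ a / q := by
        have : b + q ≤ a := by omega
        calc b / q + 1 = (b + q) / q := by rw [Nat.add_div_right _ hq]
          _ ≤ a / q := Nat.div_le_div_right this
      omega
  have himage : S.image (fun ℓ => ℓ / q) ⊆ Finset.range (n / q + 1) := by
    intro x hx
    rcases Finset.mem_image.mp hx with ⟨ℓ, hℓ, rfl⟩
    have : ℓ ≤ n := (Finset.mem_Icc.mp (mem_filter.mp hℓ).1).2
    exact Finset.mem_range.mpr (Nat.lt_succ_of_le (Nat.div_le_div_right this))
  have hcard : S.card ≤ n / q + 1 := by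
    calc S.card = (S.image (fun ℓ => ℓ / q)).card :=
          (Finset.card_image_of_injOn hinj).symm
      _ ≤ (Finset.range (n / q + 1)).card := Finset.card_le_card himage
      _ = n / q + 1 := Finset.card_range _
  have h1 : (S.card : ℝ) ≤ (n / q : ℕ) + 1 := by exact_mod_cast hcard
  have h2 : ((n / q : ℕ) : ℝ) ≤ (n : ℝ) / q := Nat.cast_div_le
  have h3 : (0 : ℝ) ≤ (n : ℝ) / q := by positivity
  linarith
end
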